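/- arXiv:2103.01060 — 4 statements merged into one kernel-verified Lean document; each statement's English description precedes it below -/
import Mathlib

section
/- Let μ1, μ2 be real numbers with μ2 > μ1, and σ1, σ2 > 0. Define f : [0,1] → ℝ by f(x) = (μ2 - μ1)·x / sqrt((σ2² - σ1²)·x + 2σ1² + (μ2 - μ1)²·x·(1 - x)). Then f is strictly increasing on [0,1]. -/
/-!
Since `f ≥ 0`, it suffices that `f² = d² x² / g x` increases, where `d = μ2 - μ1` and
`g x = b + p x - q x²` is the (positive) radicand. Cross-multiplying, the `q x²` terms cancel:
`y² g x - x² g y = (y - x) (b (x + y) + p x y)`, and the second factor is positive on `[0, 1]`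
as soon as `b > 0` and `2 b + p > 0`.
-/

open Real Set

lemma sq_mul_quadratic_sub_sq_mul_quadratic (b p q x y : ℝ) :
    y ^ 2 * (b + p * x - q * x ^ 2) - x ^ 2 * (b + p * y - q * y ^ 2) =
      (y - x) * (b * (x + y) + p * (x * y)) := by
  ring

lemma strictMonoOn_sq_div_quadratic {b p q : ℝ} (hb : 0 < b) (hbp : 0 < 2 * b + p)
    (hpos : ∀ x ∈ Icc (0 : ℝ) 1, 0 < b + p * x - q * x ^ 2) :
    StrictMonoOn (fun x => x ^ 2 / (b + p * x - q * x ^ 2)) (Icc 0 1) := by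
  rintro x hx y hy hxy
  -- `b (x + y) + p x y = b (x (1 - y) + y (1 - x)) + (2 b + p) x y`
  have hcross : 0 < b * (x + y) + p * (x * y) := by
    have hy0 : 0 < y := hx.1.trans_lt hxy
    have hx1 : 0 < 1 - x := sub_pos.2 (hxy.trans_le hy.2)
    nlinarith [mul_pos hb (mul_pos hy0 hx1), mul_nonneg hb.le (mul_nonneg hx.1 (sub_nonneg.2 hy.2)),
      mul_nonneg hbp.le (mul_nonneg hx.1 hy0.le)]
  rw [div_lt_div_iff₀ (hpos x hx) (hpos y hy), ← sub_pos,
    sq_mul_quadratic_sub_sq_mul_quadratic]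
  exact mul_pos (sub_pos.mpr hxy) hcross

lemma StrictMonoOn.div_sqrt_of_sq_div {s : Set ℝ} {g : ℝ → ℝ} (hs : s ⊆ Ici 0)
    (hg : ∀ x ∈ s, 0 ≤ g x) (h : StrictMonoOn (fun x => x ^ 2 / g x) s) :
    StrictMonoOn (fun x => x / √(g x)) s := by
  have hsqrt : ∀ x ∈ s, x / √(g x) = √(x ^ 2 / g x) := fun x hx => by
    rw [Real.sqrt_div (sq_nonneg x), Real.sqrt_sq (hs hx)]
  intro x hx y hy hxy
  simp only [hsqrt x hx, hsqrt y hy]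
  exact Real.sqrt_lt_sqrt (div_nonneg (sq_nonneg x) (hg x hx)) (h hx hy hxy)

theorem stmt_0_general (μ1 μ2 σ1 σ2 : ℝ) (hμ : μ1 < μ2) (hσ1 : 0 < σ1) :
    StrictMonoOn
      (fun x : ℝ =>
        (μ2 - μ1) * x /
          Real.sqrt ((σ2 ^ 2 - σ1 ^ 2) * x + 2 * σ1 ^ 2 + (μ2 - μ1) ^ 2 * x * (1 - x)))
      (Set.Icc 0 1) := by
  have hd : 0 < μ2 - μ1 := sub_pos.mpr hμ
  have hquad : ∀ x : ℝ, (σ2 ^ 2 - σ1 ^ 2) * x + 2 * σ1 ^ 2 + (μ2 - μ1) ^ 2 * x * (1 - x) =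
      2 * σ1 ^ 2 + (σ2 ^ 2 - σ1 ^ 2 + (μ2 - μ1) ^ 2) * x - (μ2 - μ1) ^ 2 * x ^ 2 :=
    fun x => by ring
  have hpos : ∀ x ∈ Icc (0 : ℝ) 1,
      0 < 2 * σ1 ^ 2 + (σ2 ^ 2 - σ1 ^ 2 + (μ2 - μ1) ^ 2) * x - (μ2 - μ1) ^ 2 * x ^ 2 :=
    fun x hx => by
      nlinarith [mul_nonneg (sq_nonneg σ2) hx.1, mul_nonneg (sq_nonneg σ1) (sub_nonneg.2 hx.2),
        mul_nonneg (mul_nonneg (sq_nonneg (μ2 - μ1)) hx.1) (sub_nonneg.2 hx.2)]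
  have hmono := (strictMonoOn_sq_div_quadratic (by positivity)
    (by nlinarith [pow_pos hσ1 2, sq_nonneg σ2, sq_nonneg (μ2 - μ1)]) hpos).div_sqrt_of_sq_div
    (fun x hx => hx.1) (fun x hx => (hpos x hx).le)
  simp only [hquad, mul_div_assoc]
  exact (strictMono_mul_left_of_pos hd).comp_strictMonoOn hmono

theorem stmt_0 (μ1 μ2 σ1 σ2 : ℝ) (hμ : μ1 < μ2) (hσ1 : 0 < σ1) (hσ2 : 0 < σ2) :
    StrictMonoOn
      (fun x : ℝ =>
        (μ2 - μ1) * x /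
          Real.sqrt ((σ2 ^ 2 - σ1 ^ 2) * x + 2 * σ1 ^ 2 + (μ2 - μ1) ^ 2 * x * (1 - x)))
      (Set.Icc 0 1) :=
  stmt_0_general μ1 μ2 σ1 σ2 hμ hσ1
end

section
/- Let μ1, μ2 ∈ ℝ with μ2 ≠ μ1 and σ1, σ2 > 0. Define f(x) = (μ2 - μ1)·x / sqrt((σ2² - σ1²)·x + 2σ1² + (μ2 - μ1)²·x·(1-x)) for x ∈ (0,1). Then for all x ∈ (0,1), |f'(x)| ≥ κ_a where κ_a := |μ2 - μ1| · 2·min(σ1², σ2²) / (2·max(σ1², σ2²) + (μ2 - μ1)²/4)^{3/2}, and κ_a > 0. -/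
/-!
With `g(x) = (b - a) x + 2a + c x (1 - x)` (`a = σ1²`, `b = σ2²`, `c = (μ2 - μ1)²`), the quotient
rule gives `d/dx (A x / √g(x)) = A (2 g(x) - x g'(x)) / (2 √g(x)³)`, and `2 g - x g' = (b - a + c) x + 4a`
is affine in `x`. On `[0, 1]` this numerator is at least `4 min a b`, while
`g ≤ 2 max a b + c / 4` because `x (1 - x) ≤ 1/4`; both bounds are uniform in `x`.
-/

open Real

theorem HasDerivAt.mul_id_div_sqrt {g : ℝ → ℝ} {g' x : ℝ} (A : ℝ) (hg : HasDerivAt g g' x)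
    (hpos : 0 < g x) :
    HasDerivAt (fun y => A * y / √(g y)) (A * (2 * g x - x * g') / (2 * √(g x) ^ 3)) x := by
  have hs : 0 < √(g x) := sqrt_pos.mpr hpos
  refine (((hasDerivAt_id x).const_mul A).div (hg.sqrt hpos.ne') hs.ne').congr_deriv ?_
  simp only [id]
  field_simp
  rw [sq_sqrt hpos.le]
  ring

theorem hasDerivAt_quadratic (a b c x : ℝ) :
    HasDerivAt (fun y => (b - a) * y + 2 * a + c * y * (1 - y)) (b - a + c * (1 - 2 * x)) x := by
  have h := (((hasDerivAt_id x).const_mul (b - a)).add_const (2 * a)).add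
    (((hasDerivAt_id x).const_mul c).mul ((hasDerivAt_const x 1).sub (hasDerivAt_id x)))
  refine h.congr_deriv ?_
  simp only [Pi.sub_apply, id]
  ring

section Quadratic

variable {a b c x : ℝ}

theorem quadratic_pos (ha : 0 < a) (hb : 0 < b) (hc : 0 ≤ c) (hx : x ∈ Set.Icc (0 : ℝ) 1) :
    0 < (b - a) * x + 2 * a + c * x * (1 - x) := by
  obtain ⟨hx0, hx1⟩ := hx
  nlinarith [mul_nonneg (mul_nonneg hc hx0) (sub_nonneg.mpr hx1), mul_nonneg hb.le hx0]

theorem quadratic_le (hc : 0 ≤ c) (hx : x ∈ Set.Icc (0 : ℝ) 1) :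
    (b - a) * x + 2 * a + c * x * (1 - x) ≤ 2 * max a b + c / 4 := by
  obtain ⟨hx0, hx1⟩ := hx
  have hab : b * x + a * (2 - x) ≤ 2 * max a b := by
    nlinarith [mul_le_mul_of_nonneg_right (le_max_right a b) hx0,
      mul_le_mul_of_nonneg_right (le_max_left a b) (by linarith : (0 : ℝ) ≤ 2 - x)]
  nlinarith [mul_nonneg hc (sq_nonneg (x - 1 / 2))]

theorem four_mul_min_le_numerator (hc : 0 ≤ c) (hx : x ∈ Set.Icc (0 : ℝ) 1) :
    4 * min a b ≤ (b - a + c) * x + 4 * a := by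
  obtain ⟨hx0, hx1⟩ := hx
  nlinarith [mul_le_mul_of_nonneg_right (min_le_right a b) hx0,
    mul_le_mul_of_nonneg_right (min_le_left a b) (by linarith : (0 : ℝ) ≤ 4 - x),
    mul_nonneg hc hx0]

theorem le_abs_deriv_mul_id_div_sqrt_quadratic (A : ℝ) (ha : 0 < a) (hb : 0 < b)
    (hx : x ∈ Set.Icc (0 : ℝ) 1) :
    |A| * (2 * min a b) / (2 * max a b + A ^ 2 / 4) ^ ((3 : ℝ) / 2) ≤
      |deriv (fun y => A * y / √((b - a) * y + 2 * a + A ^ 2 * y * (1 - y))) x| := by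
  set g := (b - a) * x + 2 * a + A ^ 2 * x * (1 - x)
  have hc : 0 ≤ A ^ 2 := sq_nonneg A
  have hg : 0 < g := quadratic_pos ha hb hc hx
  have hnum : 4 * min a b ≤ |2 * g - x * (b - a + A ^ 2 * (1 - 2 * x))| := by
    refine le_trans ?_ (le_abs_self _)
    linarith [four_mul_min_le_numerator (a := a) (b := b) hc hx]
  have hden : √g ^ 3 ≤ (2 * max a b + A ^ 2 / 4) ^ ((3 : ℝ) / 2) := by
    rw [rpow_div_two_eq_sqrt _ (by positivity)]
    exact_mod_cast pow_le_pow_left₀ (sqrt_nonneg g) (sqrt_le_sqrt (quadratic_le hc hx)) 3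
  rw [((hasDerivAt_quadratic a b (A ^ 2) x).mul_id_div_sqrt A hg).deriv, abs_div, abs_mul,
    abs_of_pos (by positivity : (0 : ℝ) < 2 * √g ^ 3)]
  calc |A| * (2 * min a b) / (2 * max a b + A ^ 2 / 4) ^ ((3 : ℝ) / 2)
      ≤ |A| * (2 * min a b) / √g ^ 3 := by gcongr
    _ ≤ |A| * |2 * g - x * (b - a + A ^ 2 * (1 - 2 * x))| / (2 * √g ^ 3) := by
      rw [div_le_div_iff₀ (by positivity) (by positivity)]
      nlinarith [mul_le_mul_of_nonneg_left hnum (by positivity : 0 ≤ |A| * √g ^ 3)]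

end Quadratic

theorem stmt_1 (μ1 μ2 σ1 σ2 : ℝ) (hμ : μ2 ≠ μ1) (hσ1 : 0 < σ1) (hσ2 : 0 < σ2) :
    (0 <
        |μ2 - μ1| * (2 * min (σ1 ^ 2) (σ2 ^ 2)) /
          (2 * max (σ1 ^ 2) (σ2 ^ 2) + (μ2 - μ1) ^ 2 / 4) ^ ((3 : ℝ) / 2)) ∧
      ∀ x ∈ Set.Ioo (0 : ℝ) 1,
        |μ2 - μ1| * (2 * min (σ1 ^ 2) (σ2 ^ 2)) /
            (2 * max (σ1 ^ 2) (σ2 ^ 2) + (μ2 - μ1) ^ 2 / 4) ^ ((3 : ℝ) / 2) ≤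
          |deriv
              (fun y : ℝ =>
                (μ2 - μ1) * y /
                  Real.sqrt ((σ2 ^ 2 - σ1 ^ 2) * y + 2 * σ1 ^ 2 + (μ2 - μ1) ^ 2 * y * (1 - y)))
              x| := by
  have hA : 0 < |μ2 - μ1| := abs_pos.mpr (sub_ne_zero.mpr hμ)
  have hmin : 0 < min (σ1 ^ 2) (σ2 ^ 2) := lt_min (by positivity) (by positivity)
  exact ⟨by positivity, fun x hx => le_abs_deriv_mul_id_div_sqrt_quadratic _ (by positivity)
    (by positivity) (Set.Ioo_subset_Icc_self hx)⟩
end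

section
/- Let μ1, μ2 ∈ ℝ with μ2 ≠ μ1 and σ1, σ2 > 0. Define f(x) = (μ2 - μ1)·x / sqrt((σ2² - σ1²)·x + 2σ1² + (μ2 - μ1)²·x·(1-x)) for x ∈ (0,1). Then for all x ∈ (0,1), |f'(x)| ≤ κ_b where κ_b := |μ2 - μ1| · (2·max(σ1², σ2²) + (μ2 - μ1)²) / (2·min(σ1², σ2²))^{3/2}. -/
/-! With `a = σ1²`, `b = σ2²`, `c = μ2 - μ1` and `D(x) = (b - a)x + 2a + c²x(1 - x)`, the quotient
rule gives `f'(x) = c((b - a + c²)x/2 + 2a) / D(x)^{3/2}`. On `[0, 1]` the numerator is at most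
`2 max(a, b) + c²` in absolute value, while `D(x) = xb + (2 - x)a + c²x(1 - x) ≥ 2 min(a, b)`. -/

open Real

section
variable {a b c x : ℝ}

lemma two_mul_min_le_quadratic_of_mem_Icc (hx : x ∈ Set.Icc (0 : ℝ) 1) :
    2 * min a b ≤ (b - a) * x + 2 * a + c ^ 2 * x * (1 - x) := by
  obtain ⟨hx0, hx1⟩ := hx
  have hb : x * (b - min a b) ≥ 0 := mul_nonneg hx0 (by linarith [min_le_right a b])
  have ha : (2 - x) * (a - min a b) ≥ 0 := mul_nonneg (by linarith) (by linarith [min_le_left a b])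
  have hc : c ^ 2 * x * (1 - x) ≥ 0 := mul_nonneg (mul_nonneg (sq_nonneg c) hx0) (by linarith)
  linarith

lemma abs_deriv_numerator_le_of_mem_Icc (ha : 0 ≤ a) (hb : 0 ≤ b) (hx : x ∈ Set.Icc (0 : ℝ) 1) :
    |(b - a + c ^ 2) / 2 * x + 2 * a| ≤ 2 * max a b + c ^ 2 := by
  obtain ⟨hx0, hx1⟩ := hx
  have hc : 0 ≤ c ^ 2 * x := mul_nonneg (sq_nonneg c) hx0
  rw [abs_of_nonneg (by nlinarith)]
  have hb' : x * (max a b - b) ≥ 0 := mul_nonneg hx0 (by linarith [le_max_right a b])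
  have ha' : (4 - x) * (max a b - a) ≥ 0 := mul_nonneg (by linarith) (by linarith [le_max_left a b])
  nlinarith

lemma hasDerivAt_mul_div_sqrt_quadratic (hD : 0 < (b - a) * x + 2 * a + c ^ 2 * x * (1 - x)) :
    HasDerivAt (fun y => c * y / √((b - a) * y + 2 * a + c ^ 2 * y * (1 - y)))
      (c * ((b - a + c ^ 2) / 2 * x + 2 * a) /
        ((b - a) * x + 2 * a + c ^ 2 * x * (1 - x)) ^ ((3 : ℝ) / 2)) x := by
  have hq : HasDerivAt (fun y => (b - a) * y + 2 * a + c ^ 2 * y * (1 - y))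
      ((b - a) + c ^ 2 * (1 - 2 * x)) x := by
    refine ((((hasDerivAt_id' x).const_mul (b - a)).add_const (2 * a)).add
      (((hasDerivAt_id' x).const_mul (c ^ 2)).mul ((hasDerivAt_id' x).const_sub 1))).congr_deriv ?_
    ring
  refine (((hasDerivAt_id' x).const_mul c).div (hq.sqrt hD.ne') (sqrt_pos.2 hD).ne').congr_deriv ?_
  rw [rpow_div_two_eq_sqrt _ hD.le, rpow_ofNat]
  have hs2 := sq_sqrt hD.le
  have hs := (sqrt_pos.2 hD).ne'
  generalize √((b - a) * x + 2 * a + c ^ 2 * x * (1 - x)) = s at hs hs2 ⊢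
  field_simp
  linear_combination 2 * c * hs2

end

theorem stmt_2_general (μ1 μ2 σ1 σ2 : ℝ) (hσ1 : 0 < σ1) (hσ2 : 0 < σ2) :
    ∀ x ∈ Set.Ioo (0 : ℝ) 1,
      |deriv
          (fun y : ℝ =>
            (μ2 - μ1) * y /
              Real.sqrt ((σ2 ^ 2 - σ1 ^ 2) * y + 2 * σ1 ^ 2 + (μ2 - μ1) ^ 2 * y * (1 - y)))
          x| ≤
        |μ2 - μ1| * (2 * max (σ1 ^ 2) (σ2 ^ 2) + (μ2 - μ1) ^ 2) /
          (2 * min (σ1 ^ 2) (σ2 ^ 2)) ^ ((3 : ℝ) / 2) := by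
  intro x hx
  have hx' : x ∈ Set.Icc (0 : ℝ) 1 := Set.Ioo_subset_Icc_self hx
  have hmin : 0 < 2 * min (σ1 ^ 2) (σ2 ^ 2) := by positivity
  have hD := two_mul_min_le_quadratic_of_mem_Icc (a := σ1 ^ 2) (b := σ2 ^ 2) (c := μ2 - μ1) hx'
  rw [(hasDerivAt_mul_div_sqrt_quadratic (hmin.trans_le hD)).deriv, abs_div, abs_mul,
    abs_of_pos (rpow_pos_of_pos (hmin.trans_le hD) _)]
  gcongr
  exact abs_deriv_numerator_le_of_mem_Icc (sq_nonneg _) (sq_nonneg _) hx'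

theorem stmt_2 (μ1 μ2 σ1 σ2 : ℝ) (hμ : μ2 ≠ μ1) (hσ1 : 0 < σ1) (hσ2 : 0 < σ2) :
    ∀ x ∈ Set.Ioo (0 : ℝ) 1,
      |deriv
          (fun y : ℝ =>
            (μ2 - μ1) * y /
              Real.sqrt ((σ2 ^ 2 - σ1 ^ 2) * y + 2 * σ1 ^ 2 + (μ2 - μ1) ^ 2 * y * (1 - y)))
          x| ≤
        |μ2 - μ1| * (2 * max (σ1 ^ 2) (σ2 ^ 2) + (μ2 - μ1) ^ 2) /
          (2 * min (σ1 ^ 2) (σ2 ^ 2)) ^ ((3 : ℝ) / 2) :=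
  stmt_2_general μ1 μ2 σ1 σ2 hσ1 hσ2
end

section
/- Let μ2 > μ1 and σ1, σ2 > 0 with σ2² > σ1². Define g(x) = (μ2 − μ1)·x / sqrt((σ2² − σ1²)·x + 2σ1²) for x ∈ [0,1]. Then g is strictly concave on [0,1]. -/
/-!
With `u = a * x + b` one has `c * x / √u = (c / a) * (√u - b / √u)`. On `u > 0` the square root
is strictly concave and `b / √u` (a convex antitone function of the concave `√u`) is convex, so
their difference is strictly concave, and this survives the injective affine substitution and
the positive scaling.
-/

open Real Set

section

variable {𝕜 E F β : Type*} [Ring 𝕜] [PartialOrder 𝕜] [AddCommGroup E] [Module 𝕜 E]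
  [AddCommGroup F] [Module 𝕜 F] [AddCommMonoid β] [PartialOrder β] [SMul 𝕜 β]

theorem StrictConcaveOn.comp_affineMap {f : F → β} {s : Set F} (hf : StrictConcaveOn 𝕜 s f)
    (g : E →ᵃ[𝕜] F) (hg : Function.Injective g) : StrictConcaveOn 𝕜 (g ⁻¹' s) (f ∘ g) :=
  ⟨hf.1.affine_preimage g, fun x hx y hy hxy a b ha hb hab =>
    calc
      (f ∘ g) (a • x + b • y) = f (a • g x + b • g y) := by
        rw [Function.comp_apply, Convex.combo_affine_apply hab]
      _ > a • f (g x) + b • f (g y) := hf.2 hx hy (hg.ne hxy) ha hb hab⟩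

end

theorem StrictConcaveOn.const_mul {𝕜 E : Type*} [Field 𝕜] [LinearOrder 𝕜] [IsStrictOrderedRing 𝕜]
    [AddCommMonoid E] [Module 𝕜 E] {f : E → 𝕜} {s : Set E} (hf : StrictConcaveOn 𝕜 s f) {c : 𝕜}
    (hc : 0 < c) : StrictConcaveOn 𝕜 s fun x => c * f x :=
  ⟨hf.1, fun x hx y hy hxy a b ha hb hab => by
    have h := mul_lt_mul_of_pos_left (hf.2 hx hy hxy ha hb hab) hc
    simp only [smul_eq_mul] at h ⊢
    linarith⟩

theorem image_sqrt_Ioi_zero : sqrt '' Ioi 0 = Ioi 0 := by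
  ext t
  constructor
  · rintro ⟨u, hu, rfl⟩
    exact sqrt_pos.2 hu
  · intro ht
    exact ⟨t ^ 2, pow_pos (mem_Ioi.1 ht) 2, sqrt_sq (le_of_lt ht)⟩

theorem convexOn_div_sqrt {b : ℝ} (hb : 0 ≤ b) : ConvexOn ℝ (Ioi 0) fun u => b / √u := by
  have hinv : ConvexOn ℝ (sqrt '' Ioi 0) fun t : ℝ => t⁻¹ := by
    simpa [image_sqrt_Ioi_zero] using convexOn_zpow (𝕜 := ℝ) (-1)
  have hanti : AntitoneOn (fun t : ℝ => t⁻¹) (sqrt '' Ioi 0) := by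
    rw [image_sqrt_Ioi_zero]
    exact fun s hs t _ hst => inv_anti₀ hs hst
  have hconcave := strictConcaveOn_sqrt.concaveOn.subset Ioi_subset_Ici_self (convex_Ioi 0)
  simpa [div_eq_mul_inv] using (hinv.comp_concaveOn hconcave hanti).smul hb

theorem strictConcaveOn_sqrt_sub_div_sqrt {b : ℝ} (hb : 0 ≤ b) :
    StrictConcaveOn ℝ (Ioi 0) fun u => √u - b / √u :=
  (strictConcaveOn_sqrt.subset Ioi_subset_Ici_self (convex_Ioi 0)).sub_convexOn
    (convexOn_div_sqrt hb)

theorem strictConcaveOn_mul_div_sqrt {a b c : ℝ} (ha : 0 < a) (hb : 0 ≤ b) (hc : 0 < c) :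
    StrictConcaveOn ℝ (Ioi (-b / a)) fun x => c * x / √(a * x + b) := by
  let g : ℝ →ᵃ[ℝ] ℝ := a • AffineMap.id ℝ ℝ + AffineMap.const ℝ ℝ b
  have hg : ∀ x, g x = a * x + b := fun x => rfl
  have hpos : ∀ x ∈ Ioi (-b / a), 0 < a * x + b := fun x hx => by
    have := (div_lt_iff₀ ha).1 hx
    linarith
  have hcomp := ((strictConcaveOn_sqrt_sub_div_sqrt hb).comp_affineMap g
    fun x y h => mul_left_cancel₀ ha.ne' (by simpa [hg] using h)).const_mul (div_pos hc ha)
  refine (hcomp.subset (fun x hx => by simpa [hg] using hpos x hx) (convex_Ioi _)).congr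
    fun x hx => ?_
  have hs : 0 < √(a * x + b) := sqrt_pos.2 (hpos x hx)
  show c / a * (√(a * x + b) - b / √(a * x + b)) = c * x / √(a * x + b)
  field_simp
  linear_combination mul_self_sqrt (hpos x hx).le

theorem stmt_14_general (μ1 μ2 σ1 σ2 : ℝ) (hμ : μ1 < μ2) (hσ1 : 0 < σ1)
    (hσ : σ1 ^ 2 < σ2 ^ 2) :
    StrictConcaveOn ℝ (Set.Icc (0 : ℝ) 1)
      (fun x => (μ2 - μ1) * x / Real.sqrt ((σ2 ^ 2 - σ1 ^ 2) * x + 2 * σ1 ^ 2)) := by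
  have ha : 0 < σ2 ^ 2 - σ1 ^ 2 := sub_pos.2 hσ
  have hb : 0 < 2 * σ1 ^ 2 := by positivity
  refine (strictConcaveOn_mul_div_sqrt ha hb.le (sub_pos.2 hμ)).subset
    (fun x hx => ?_) (convex_Icc 0 1)
  exact lt_of_lt_of_le (div_neg_of_neg_of_pos (neg_neg_of_pos hb) ha) hx.1

theorem stmt_14 (μ1 μ2 σ1 σ2 : ℝ) (hμ : μ1 < μ2) (hσ1 : 0 < σ1) (hσ2 : 0 < σ2)
    (hσ : σ1 ^ 2 < σ2 ^ 2) :
    StrictConcaveOn ℝ (Set.Icc (0 : ℝ) 1)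
      (fun x => (μ2 - μ1) * x / Real.sqrt ((σ2 ^ 2 - σ1 ^ 2) * x + 2 * σ1 ^ 2)) :=
  stmt_14_general μ1 μ2 σ1 σ2 hμ hσ1 hσ
end
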